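/- Let 0 < b < c and z, z₀ ∈ ℝ with 0 < z ≤ z₀. Then |₁F₁(b;c;z) − e^{z−z₀} ₁F₁(b;c;z₀)| ≤ e^{z₀}/4. -/

import Mathlib

open Real MeasureTheory

/-- Classical Euler beta function `B(x,y) = ∫₀¹ t^(x-1) (1-t)^(y-1) dt`. -/
noncomputable def eulerBeta (x y : ℝ) : ℝ :=
  ∫ t in (0:ℝ)..1, t ^ (x - 1) * (1 - t) ^ (y - 1)

/-- `λ_{x,y} = x^x y^y / (x+y)^(x+y)`; the convention `0^0 = 1` is automatic for `rpow`. -/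
noncomputable def lam (x y : ℝ) : ℝ := x ^ x * y ^ y / (x + y) ^ (x + y)

/-- Pochhammer symbol `(x)_n = x (x+1) ⋯ (x+n-1)`. -/
noncomputable def poch (x : ℝ) (n : ℕ) : ℝ := ∏ k ∈ Finset.range n, (x + k)

/-- Confluent hypergeometric (Kummer) function `₁F₁(b;c;z)`. -/
noncomputable def oneF1 (b c z : ℝ) : ℝ :=
  ∑' n : ℕ, poch b n / poch c n * z ^ n / (Nat.factorial n : ℝ)

/-!
Write `₁F₁(b;c;t) = ∑ αₙ tⁿ/n!` with `αₙ = (b)ₙ/(c)ₙ`, which for `0 < b ≤ c` decreases from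
`α₀ = 1`. For any nonnegative decreasing `α`, the function `t ↦ e^{-t} ∑ αₙ tⁿ/n!` decreases
on `[0, ∞)`: comparing the Cauchy products `eˢ F(t)` and `eᵗ F(s)` coefficientwise, the terms
indexed by `(k, m)` and `(m, k)` pair up into `(αₘ - αₖ)(tᵏsᵐ - sᵏtᵐ)/(k! m!) ≥ 0`.
This gives `e^{z-z₀} F(z₀) ≤ F(z)`. Conversely `F(z) ≤ F(z₀)` and `F(z) ≤ eᶻ`, so
`F(z) - e^{z-z₀} F(z₀) ≤ eᶻ (1 - e^{z-z₀}) = e^{z₀} u (1 - u) ≤ e^{z₀}/4` with `u = e^{z-z₀}`.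
-/

open Finset Nat

lemma poch_pos {x : ℝ} (hx : 0 < x) (n : ℕ) : 0 < poch x n :=
  prod_pos fun _ _ => by positivity

lemma poch_succ (x : ℝ) (n : ℕ) : poch x (n + 1) = poch x n * (x + n) :=
  prod_range_succ _ _

lemma antitone_poch_div_poch {b c : ℝ} (hb : 0 < b) (hbc : b ≤ c) :
    Antitone fun n => poch b n / poch c n := by
  refine antitone_nat_of_succ_le fun n => ?_
  have hc : 0 < c := hb.trans_le hbc
  rw [poch_succ, poch_succ, mul_div_mul_comm]
  exact mul_le_of_le_one_right (div_pos (poch_pos hb n) (poch_pos hc n)).le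
    ((div_le_one (by positivity)).2 (by linarith))

lemma pow_mul_pow_le_pow_mul_pow {s t : ℝ} (hs : 0 ≤ s) (hst : s ≤ t) {k m : ℕ} (hkm : k ≤ m) :
    t ^ k * s ^ m ≤ s ^ k * t ^ m := by
  obtain ⟨d, rfl⟩ := Nat.exists_eq_add_of_le hkm
  have ht : 0 ≤ t := hs.trans hst
  calc t ^ k * s ^ (k + d) = s ^ k * t ^ k * s ^ d := by ring
    _ ≤ s ^ k * t ^ k * t ^ d := by gcongr
    _ = s ^ k * t ^ (k + d) := by ring

lemma Antitone.mul_sub_pow_mul_pow_nonneg {α : ℕ → ℝ} (hα : Antitone α) {s t : ℝ}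
    (hs : 0 ≤ s) (hst : s ≤ t) (k m : ℕ) :
    0 ≤ (α m - α k) * (t ^ k * s ^ m - s ^ k * t ^ m) := by
  wlog hkm : k ≤ m generalizing k m
  · convert this m k (le_of_not_ge hkm) using 1
    ring
  exact mul_nonneg_of_nonpos_of_nonpos (sub_nonpos.2 (hα hkm))
    (sub_nonpos.2 (pow_mul_pow_le_pow_mul_pow hs hst hkm))

lemma Real.exp_eq_tsum_pow_div_factorial (t : ℝ) : exp t = ∑' n : ℕ, t ^ n / n ! := by
  rw [exp_eq_exp_ℝ, (NormedSpace.expSeries_div_hasSum_exp t).tsum_eq]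

lemma Real.exp_mul_one_sub_exp_sub_le (x y : ℝ) : exp x * (1 - exp (x - y)) ≤ exp y / 4 := by
  have hx : exp x = exp (x - y) * exp y := by rw [← exp_add, sub_add_cancel]
  rw [hx]
  nlinarith [mul_nonneg (sq_nonneg (exp (x - y) - 1 / 2)) (exp_pos y).le]

lemma sum_antidiagonal_le_of_add_swap_le {n : ℕ} {f g : ℕ × ℕ → ℝ}
    (h : ∀ kl ∈ antidiagonal n, f kl + f kl.swap ≤ g kl + g kl.swap) :
    ∑ kl ∈ antidiagonal n, f kl ≤ ∑ kl ∈ antidiagonal n, g kl := by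
  have hsum := sum_le_sum h
  rw [sum_add_distrib, sum_add_distrib, Nat.sum_antidiagonal_swap,
    Nat.sum_antidiagonal_swap] at hsum
  linarith

noncomputable def weightedExpSeries (α : ℕ → ℝ) (t : ℝ) : ℝ := ∑' n : ℕ, α n * t ^ n / n !

lemma oneF1_eq_weightedExpSeries (b c : ℝ) :
    oneF1 b c = weightedExpSeries fun n => poch b n / poch c n := rfl

section WeightedExpSeries

variable {α : ℕ → ℝ} {C : ℝ}

lemma summable_norm_weightedExpSeries (h0 : ∀ n, 0 ≤ α n) (hC : ∀ n, α n ≤ C) (t : ℝ) :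
    Summable fun n => ‖α n * t ^ n / (n ! : ℝ)‖ := by
  refine ((summable_pow_div_factorial |t|).mul_left C).of_nonneg_of_le (fun _ => norm_nonneg _)
    fun n => ?_
  rw [norm_div, norm_mul, norm_pow, Real.norm_of_nonneg (h0 n), Real.norm_natCast,
    Real.norm_eq_abs, mul_div_assoc]
  gcongr
  exact hC n

lemma weightedExpSeries_mono (h0 : ∀ n, 0 ≤ α n) (hC : ∀ n, α n ≤ C) {s t : ℝ}
    (hs : 0 ≤ s) (hst : s ≤ t) : weightedExpSeries α s ≤ weightedExpSeries α t := by
  refine Summable.tsum_le_tsum (fun n => ?_) (summable_norm_weightedExpSeries h0 hC s).of_norm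
    (summable_norm_weightedExpSeries h0 hC t).of_norm
  have := h0 n
  gcongr

lemma weightedExpSeries_le (h0 : ∀ n, 0 ≤ α n) (hC : ∀ n, α n ≤ C) {t : ℝ} (ht : 0 ≤ t) :
    weightedExpSeries α t ≤ C * exp t := by
  rw [exp_eq_tsum_pow_div_factorial, ← tsum_mul_left]
  refine Summable.tsum_le_tsum (fun n => ?_) (summable_norm_weightedExpSeries h0 hC t).of_norm
    ((summable_pow_div_factorial t).mul_left C)
  rw [mul_div_assoc]
  gcongr
  exact hC n

lemma Antitone.pow_div_factorial_pair_le (hα : Antitone α) {s t : ℝ} (hs : 0 ≤ s) (hst : s ≤ t)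
    (k m : ℕ) :
    s ^ k / k ! * (α m * t ^ m / m !) + s ^ m / m ! * (α k * t ^ k / k !) ≤
      t ^ k / k ! * (α m * s ^ m / m !) + t ^ m / m ! * (α k * s ^ k / k !) := by
  have hpair := hα.mul_sub_pow_mul_pow_nonneg hs hst k m
  have hdiff : t ^ k / k ! * (α m * s ^ m / m !) + t ^ m / m ! * (α k * s ^ k / k !) -
      (s ^ k / k ! * (α m * t ^ m / m !) + s ^ m / m ! * (α k * t ^ k / k !)) =
      (α m - α k) * (t ^ k * s ^ m - s ^ k * t ^ m) / (k ! * m !) := by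
    field_simp
    ring
  linarith [div_nonneg hpair (by positivity : (0 : ℝ) ≤ k ! * m !)]

lemma Antitone.exp_mul_weightedExpSeries_le (hα : Antitone α) (h0 : ∀ n, 0 ≤ α n) {s t : ℝ}
    (hs : 0 ≤ s) (hst : s ≤ t) :
    exp s * weightedExpSeries α t ≤ exp t * weightedExpSeries α s := by
  have hC : ∀ n, α n ≤ α 0 := fun n => hα (Nat.zero_le n)
  have hexp (u : ℝ) : Summable fun n => ‖u ^ n / (n ! : ℝ)‖ :=
    NormedSpace.norm_expSeries_div_summable u
  have hW := summable_norm_weightedExpSeries h0 hC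
  rw [exp_eq_tsum_pow_div_factorial, exp_eq_tsum_pow_div_factorial, weightedExpSeries,
    weightedExpSeries, tsum_mul_tsum_eq_tsum_sum_antidiagonal_of_summable_norm (hexp s) (hW t),
    tsum_mul_tsum_eq_tsum_sum_antidiagonal_of_summable_norm (hexp t) (hW s)]
  refine Summable.tsum_le_tsum (fun n => ?_)
    (summable_norm_sum_mul_antidiagonal_of_summable_norm (hexp s) (hW t)).of_norm
    (summable_norm_sum_mul_antidiagonal_of_summable_norm (hexp t) (hW s)).of_norm
  exact sum_antidiagonal_le_of_add_swap_le fun kl _ =>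
    hα.pow_div_factorial_pair_le hs hst kl.1 kl.2

end WeightedExpSeries

theorem stmt11 (b c z z₀ : ℝ) (hb : 0 < b) (hbc : b < c) (hz : 0 < z) (hzz : z ≤ z₀) :
    |oneF1 b c z - Real.exp (z - z₀) * oneF1 b c z₀| ≤ Real.exp z₀ / 4 := by
  set α : ℕ → ℝ := fun n => poch b n / poch c n
  have hanti : Antitone α := antitone_poch_div_poch hb hbc.le
  have h0 (n : ℕ) : 0 ≤ α n := (div_pos (poch_pos hb n) (poch_pos (hb.trans hbc) n)).le
  have h1 (n : ℕ) : α n ≤ 1 := by simpa [α, poch] using hanti (Nat.zero_le n)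
  rw [oneF1_eq_weightedExpSeries]
  have hlower : exp (z - z₀) * weightedExpSeries α z₀ ≤ weightedExpSeries α z := by
    rw [exp_sub, div_mul_eq_mul_div, div_le_iff₀ (exp_pos z₀), mul_comm _ (exp z₀)]
    exact hanti.exp_mul_weightedExpSeries_le h0 hz.le hzz
  have hmono := weightedExpSeries_mono h0 h1 hz.le hzz
  have hle_exp : weightedExpSeries α z ≤ exp z := by
    simpa using weightedExpSeries_le h0 h1 hz.le
  have hexp_le_one : exp (z - z₀) ≤ 1 := exp_le_one_iff.2 (by linarith)
  rw [abs_of_nonneg (by linarith)]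
  calc weightedExpSeries α z - exp (z - z₀) * weightedExpSeries α z₀
      ≤ weightedExpSeries α z * (1 - exp (z - z₀)) := by nlinarith [exp_pos (z - z₀)]
    _ ≤ exp z * (1 - exp (z - z₀)) := by gcongr
    _ ≤ exp z₀ / 4 := exp_mul_one_sub_exp_sub_le z z₀
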